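/- arXiv:1906.10688 — 6 statements merged into one kernel-verified Lean document; each statement's English description precedes it below -/
import Mathlib

section
/- For all real a, b with −1 ≤ a < 1 and 0 < b < 1, the inequality ∫_0^∞ sinh(b t)/(cosh t − a) dt > −(2b/(1 + a)) · log((1 − a)/2) holds. -/
open Real MeasureTheory Set Filter Topology

set_option maxHeartbeats 1000000

/-- For `x > 0`, `sinh x < x * cosh x`. -/
lemma aux_sinh_lt_mul_cosh {x : ℝ} (hx : 0 < x) : Real.sinh x < x * Real.cosh x := by
  have key : StrictMonoOn (fun y : ℝ => y * Real.cosh y - Real.sinh y) (Set.Ici 0) := by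
    have hder : ∀ y : ℝ, HasDerivAt (fun y : ℝ => y * Real.cosh y - Real.sinh y)
        (y * Real.sinh y) y := by
      intro y
      have h1 := (hasDerivAt_id y).mul (Real.hasDerivAt_cosh y)
      have h2 := Real.hasDerivAt_sinh y
      have := h1.sub h2
      refine this.congr_deriv ?_
      simp only [id_eq]
      ring
    apply strictMonoOn_of_deriv_pos (convex_Ici 0)
    · exact ((continuous_id.mul Real.continuous_cosh).sub Real.continuous_sinh).continuousOn
    · intro y hy
      rw [interior_Ici, Set.mem_Ioi] at hy
      rw [(hder y).deriv]
      have : 0 < Real.sinh y := by rwa [Real.sinh_pos_iff]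
      positivity
  have := key (Set.self_mem_Ici) (Set.mem_Ici.mpr hx.le) hx
  simp at this
  linarith

/-- For `t > 0`, `2 * sinh t < t * (cosh t + 1)`. -/
lemma aux_two_sinh_lt {t : ℝ} (ht : 0 < t) : 2 * Real.sinh t < t * (Real.cosh t + 1) := by
  have hu : (0:ℝ) < t / 2 := by linarith
  have h1 := aux_sinh_lt_mul_cosh hu
  have h2 : Real.sinh t = 2 * Real.sinh (t/2) * Real.cosh (t/2) := by
    have := Real.sinh_two_mul (t/2)
    rwa [show (2:ℝ) * (t/2) = t by ring] at this
  have h3 : Real.cosh t = Real.cosh (t/2) ^ 2 + Real.sinh (t/2) ^ 2 := by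
    have := Real.cosh_two_mul (t/2)
    rwa [show (2:ℝ) * (t/2) = t by ring] at this
  have h4 : Real.cosh (t/2) ^ 2 - Real.sinh (t/2) ^ 2 = 1 := Real.cosh_sq_sub_sinh_sq _
  have h5 : 0 < Real.cosh (t/2) := Real.cosh_pos (t/2)
  nlinarith

theorem stmt_4 (a b : ℝ) (ha : -1 ≤ a) (ha1 : a < 1) (hb : 0 < b) (hb1 : b < 1) :
    -(2*b/(1+a)) * Real.log ((1-a)/2) <
      ∫ t in Set.Ioi (0:ℝ), Real.sinh (b*t) / (Real.cosh t - a) := by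
  -- Notation
  set f : ℝ → ℝ := fun t => Real.sinh (b*t) / (Real.cosh t - a) with hf_def
  have hden : ∀ t : ℝ, 0 < Real.cosh t - a := by
    intro t
    have := Real.one_le_cosh t
    linarith
  -- f is continuous
  have hcontf : Continuous f := by
    apply Continuous.div
    · exact Real.continuous_sinh.comp (continuous_const.mul continuous_id)
    · exact Real.continuous_cosh.sub continuous_const
    · exact fun t => ne_of_gt (hden t)
  -- f is nonneg/pos on Ioi 0
  have hfpos : ∀ t ∈ Set.Ioi (0:ℝ), 0 < f t := by
    intro t ht
    rw [Set.mem_Ioi] at ht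
    apply div_pos _ (hden t)
    rw [Real.sinh_pos_iff]
    positivity
  -- Integrability of f, dominated by (2/(1-a)) * exp (-(1-b)*t)
  have hIntf : IntegrableOn f (Set.Ioi (0:ℝ)) := by
    have hdom : IntegrableOn (fun t => (2/(1-a)) * Real.exp (-(1-b)*t)) (Set.Ioi (0:ℝ)) :=
      (exp_neg_integrableOn_Ioi 0 (by linarith : (0:ℝ) < 1-b)).const_mul _
    apply hdom.mono' hcontf.aestronglyMeasurable.restrict
    filter_upwards [ae_restrict_mem measurableSet_Ioi] with t ht
    rw [Set.mem_Ioi] at ht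
    rw [Real.norm_eq_abs, abs_of_nonneg (le_of_lt (hfpos t ht))]
    have h1 : Real.sinh (b*t) ≤ Real.exp (b*t) / 2 := by
      rw [Real.sinh_eq]
      have := Real.exp_pos (-(b*t))
      linarith
    have hexp : Real.exp t / 2 ≤ Real.cosh t := by
      rw [Real.cosh_eq]
      have := Real.exp_pos (-t)
      linarith
    have h2 : (1-a)/4 * Real.exp t ≤ Real.cosh t - a := by
      have hch : (1-a)/2 * Real.cosh t ≤ Real.cosh t - a := by
        have h1c := Real.one_le_cosh t
        nlinarith
      have : (1-a)/4 * Real.exp t ≤ (1-a)/2 * Real.cosh t := by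
        have h1a : (0:ℝ) < 1 - a := by linarith
        nlinarith
      linarith
    have h3 : (0:ℝ) < (1-a)/4 * Real.exp t := by
      have := Real.exp_pos t
      have h1a : (0:ℝ) < 1 - a := by linarith
      positivity
    calc f t ≤ (Real.exp (b*t) / 2) / ((1-a)/4 * Real.exp t) :=
          div_le_div₀ (by positivity) h1 h3 h2
      _ = (2/(1-a)) * Real.exp (-(1-b)*t) := by
          rw [show -(1-b)*t = b*t - t by ring, Real.exp_sub]
          have h1a : (1:ℝ) - a ≠ 0 := by linarith
          have := Real.exp_ne_zero t
          field_simp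
          ring
  -- Case a = -1 : RHS constant is 0
  rcases eq_or_lt_of_le ha with rfl | ha'
  · have hlog : Real.log ((1-(-1 : ℝ))/2) = 0 := by norm_num
    rw [hlog, mul_zero]
    rw [setIntegral_pos_iff_support_of_nonneg_ae]
    · refine lt_of_lt_of_le ?_ (measure_mono (fun t ht => ⟨ne_of_gt (hfpos t ht), ht⟩))
      simp [Real.volume_Ioi]
    · filter_upwards [ae_restrict_mem measurableSet_Ioi] with t ht
      exact le_of_lt (hfpos t ht)
    · exact hIntf
  -- Main case : -1 < a < 1
  · set g : ℝ → ℝ := fun t => 2*b*Real.sinh t / ((Real.cosh t - a) * (Real.cosh t + 1))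
      with hg_def
    have hden1 : ∀ t : ℝ, 0 < Real.cosh t + 1 := by
      intro t
      have := Real.one_le_cosh t
      linarith
    have h1pa : (0:ℝ) < 1 + a := by linarith
    -- pointwise strict inequality g < f on Ioi 0
    have hlt : ∀ t ∈ Set.Ioi (0:ℝ), g t < f t := by
      intro t ht
      rw [Set.mem_Ioi] at ht
      have hbt : b * t ≤ Real.sinh (b*t) := by
        rw [Real.self_le_sinh_iff]
        positivity
      have hkey : 2 * Real.sinh t < t * (Real.cosh t + 1) := aux_two_sinh_lt ht
      have hnum : 2*b*Real.sinh t < Real.sinh (b*t) * (Real.cosh t + 1) := by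
        have : b * (2 * Real.sinh t) < b * (t * (Real.cosh t + 1)) :=
          mul_lt_mul_of_pos_left hkey hb
        have h2 : b * t * (Real.cosh t + 1) ≤ Real.sinh (b*t) * (Real.cosh t + 1) :=
          mul_le_mul_of_nonneg_right hbt (le_of_lt (hden1 t))
        nlinarith
      rw [hg_def, hf_def]
      rw [div_lt_div_iff₀ (mul_pos (hden t) (hden1 t)) (hden t)]
      have hd := hden t
      nlinarith [mul_lt_mul_of_pos_right hnum (hden t)]
    -- g is nonneg on Ioi 0
    have hgpos : ∀ t ∈ Set.Ioi (0:ℝ), 0 ≤ g t := by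
      intro t ht
      rw [Set.mem_Ioi] at ht
      have hs : 0 ≤ Real.sinh t := by rw [Real.sinh_nonneg_iff]; exact ht.le
      have := hden t
      have := hden1 t
      positivity
    -- g is continuous, hence integrable (dominated by f)
    have hcontg : Continuous g := by
      apply Continuous.div
      · exact (continuous_const.mul Real.continuous_sinh)
      · exact (Real.continuous_cosh.sub continuous_const).mul
          (Real.continuous_cosh.add continuous_const)
      · exact fun t => ne_of_gt (mul_pos (hden t) (hden1 t))
    have hIntg : IntegrableOn g (Set.Ioi (0:ℝ)) := by
      apply hIntf.mono' hcontg.aestronglyMeasurable.restrict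
      filter_upwards [ae_restrict_mem measurableSet_Ioi] with t ht
      rw [Real.norm_eq_abs, abs_of_nonneg (hgpos t ht)]
      exact le_of_lt (hlt t ht)
    -- the antiderivative of g
    set G : ℝ → ℝ := fun t => (2*b/(1+a)) *
        (Real.log (Real.cosh t - a) - Real.log (Real.cosh t + 1)) with hG_def
    have hderiv : ∀ t ∈ Set.Ici (0:ℝ), HasDerivAt G (g t) t := by
      intro t _
      have h1 : HasDerivAt (fun t => Real.log (Real.cosh t - a))
          (Real.sinh t / (Real.cosh t - a)) t :=
        ((Real.hasDerivAt_cosh t).sub_const a).log (ne_of_gt (hden t))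
      have h2 : HasDerivAt (fun t => Real.log (Real.cosh t + 1))
          (Real.sinh t / (Real.cosh t + 1)) t :=
        ((Real.hasDerivAt_cosh t).add_const 1).log (ne_of_gt (hden1 t))
      have := ((h1.sub h2).const_mul (2*b/(1+a)))
      refine this.congr_deriv ?_
      rw [hg_def]
      have hd := hden t
      have hd1 := hden1 t
      field_simp
      ring
    -- G tends to 0 at infinity
    have htends : Tendsto G atTop (𝓝 0) := by
      have hcosh : Tendsto Real.cosh atTop atTop := by
        apply tendsto_atTop_mono (fun t => ?_)
          (Real.tendsto_exp_atTop.atTop_div_const two_pos)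
        rw [Real.cosh_eq]
        have := Real.exp_pos (-t)
        linarith
      have hratio : Tendsto (fun t => (Real.cosh t - a) / (Real.cosh t + 1)) atTop (𝓝 1) := by
        have h1 : Tendsto (fun t => (1+a) / (Real.cosh t + 1)) atTop (𝓝 0) :=
          tendsto_const_nhds.div_atTop (tendsto_atTop_add_const_right _ 1 hcosh)
        have h2 : Tendsto (fun t => 1 - (1+a) / (Real.cosh t + 1)) atTop (𝓝 (1 - 0)) :=
          tendsto_const_nhds.sub h1
        rw [sub_zero] at h2
        apply h2.congr (fun t => ?_)
        have := hden1 t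
        field_simp
        ring
      have hlogr : Tendsto (fun t => Real.log ((Real.cosh t - a) / (Real.cosh t + 1)))
          atTop (𝓝 0) := by
        have := (Real.continuousAt_log one_ne_zero).tendsto.comp hratio
        simpa [Function.comp_def] using this
      have : Tendsto (fun t => (2*b/(1+a)) *
          Real.log ((Real.cosh t - a) / (Real.cosh t + 1))) atTop (𝓝 ((2*b/(1+a)) * 0)) :=
        hlogr.const_mul _
      rw [mul_zero] at this
      apply this.congr (fun t => ?_)
      rw [hG_def, Real.log_div (ne_of_gt (hden t)) (ne_of_gt (hden1 t))]
    -- compute the integral of g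
    have hintG : ∫ t in Set.Ioi (0:ℝ), g t = -(2*b/(1+a)) * Real.log ((1-a)/2) := by
      rw [integral_Ioi_of_hasDerivAt_of_tendsto' hderiv hIntg htends]
      rw [hG_def]
      simp only [Real.cosh_zero]
      rw [Real.log_div (by linarith : (1:ℝ) - a ≠ 0) two_ne_zero]
      norm_num
    -- positivity of the integral of f - g
    have hpos : 0 < ∫ t in Set.Ioi (0:ℝ), (f t - g t) := by
      rw [setIntegral_pos_iff_support_of_nonneg_ae]
      · refine lt_of_lt_of_le ?_ (measure_mono (fun t ht => ⟨?_, ht⟩))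
        · simp [Real.volume_Ioi]
        · exact ne_of_gt (sub_pos.mpr (hlt t ht))
      · filter_upwards [ae_restrict_mem measurableSet_Ioi] with t ht
        exact le_of_lt (sub_pos.mpr (hlt t ht))
      · exact hIntf.sub hIntg
    rw [integral_sub hIntf hIntg] at hpos
    rw [hintG] at hpos
    linarith
end

section
/- Define f(α, d) := ∑_{m ∈ ℤ} e^{i m α}/|d + m| for 0 < d < 1 and α ∈ (0, π). Then the imaginary part satisfies Im f(α, d) = ∑_{m=1}^∞ sin(m α) · (1/|d + m| − 1/|d − m|), and this equals sin(α) · ∫_0^∞ sinh(d t)/(cos α − cosh t) dt; in particular Im f(α, d) < 0 for all α ∈ (0, π) and 0 < d < 1. -/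
open Real Filter

private lemma aux_exp_int (c : ℝ) (hc : 0 < c) :
    ∫ t in Set.Ioi (0:ℝ), Real.exp (-(c*t)) = 1/c := by
  have h := integral_exp_neg_mul_rpow one_pos hc
  simp only [Real.rpow_one, neg_mul] at h ⊢
  rw [h]
  norm_num [Real.rpow_neg_one, Real.Gamma_two, one_div]

private lemma aux_exp_intble (c : ℝ) (hc : 0 < c) :
    MeasureTheory.IntegrableOn (fun t => Real.exp (-(c*t))) (Set.Ioi (0:ℝ)) := by
  simpa [neg_mul] using exp_neg_integrableOn_Ioi 0 hc

private lemma aux_geom (α t : ℝ) (ht : 0 < t) (x : ℝ) (hx : x = Real.exp (-t)) :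
    HasSum (fun n : ℕ => Real.sin (((n:ℝ)+1)*α) * x^(n+1))
      (x * Real.sin α / (1 - 2*x*Real.cos α + x^2)) := by
  have hx0 : 0 < x := hx ▸ Real.exp_pos _
  have hx1 : x < 1 := by rw [hx]; exact Real.exp_lt_one_iff.mpr (by linarith)
  set z : ℂ := (x:ℂ) * Complex.exp (α * Complex.I) with hz
  have hnz : ‖z‖ < 1 := by
    rw [hz, norm_mul, Complex.norm_exp_ofReal_mul_I, mul_one, Complex.norm_real,
      Real.norm_eq_abs, abs_of_pos hx0]
    exact hx1
  have hgeo := (hasSum_geometric_of_norm_lt_one hnz).mul_left z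
  have him := (Complex.hasSum_iff _ _).mp hgeo |>.2
  have hterm : ∀ n : ℕ, (z * z^n).im = Real.sin (((n:ℝ)+1)*α) * x^(n+1) := by
    intro n
    have : z * z ^ n = ((x^(n+1) : ℝ) : ℂ) * Complex.exp (((((n:ℝ)+1)*α : ℝ) : ℂ) * Complex.I) := by
      rw [← pow_succ']
      rw [hz, mul_pow, ← Complex.ofReal_pow]
      congr 1
      rw [← Complex.exp_nat_mul]
      congr 1
      push_cast
      ring
    rw [this, Complex.im_ofReal_mul, Complex.exp_ofReal_mul_I_im]
    ring
  have hval : (z * (1 - z)⁻¹).im = x * Real.sin α / (1 - 2*x*Real.cos α + x^2) := by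
    have hre : z.re = x * Real.cos α := by
      rw [hz]
      rw [show ((α:ℂ) * Complex.I) = (((α:ℝ):ℂ) * Complex.I) from rfl]
      rw [Complex.re_ofReal_mul, Complex.exp_ofReal_mul_I_re]
    have him' : z.im = x * Real.sin α := by
      rw [hz, Complex.im_ofReal_mul, Complex.exp_ofReal_mul_I_im]
    have hD : (0:ℝ) < 1 - 2*x*Real.cos α + x^2 := by
      nlinarith [Real.neg_one_le_cos α, Real.cos_le_one α, sq_nonneg (1-x), sq_nonneg (1+x)]
    have hnsq : Complex.normSq (1 - z) = 1 - 2*x*Real.cos α + x^2 := by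
      rw [Complex.normSq_apply]
      simp only [Complex.sub_re, Complex.sub_im, Complex.one_re, Complex.one_im, hre, him']
      nlinarith [Real.sin_sq_add_cos_sq α]
    rw [← div_eq_mul_inv, Complex.div_im, hnsq]
    simp only [Complex.sub_re, Complex.sub_im, Complex.one_re, Complex.one_im, hre, him']
    field_simp
    ring
  rw [← hval]
  exact him.congr_fun (fun n => (hterm n).symm)

theorem stmt_9 (α d : ℝ) (hα : α ∈ Set.Ioo 0 π) (hd : d ∈ Set.Ioo (0:ℝ) 1) :
    Filter.Tendsto (fun N : ℕ => ∑ m ∈ Finset.Icc (-(N:ℤ)) (N:ℤ),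
        Real.sin (m * α) / |d + m|) Filter.atTop
      (nhds (∑' m : ℕ, Real.sin (((m:ℝ)+1) * α) * (1 / |d + ((m:ℝ)+1)| - 1 / |d - ((m:ℝ)+1)|))) ∧
    (∑' m : ℕ, Real.sin (((m:ℝ)+1) * α) * (1 / |d + ((m:ℝ)+1)| - 1 / |d - ((m:ℝ)+1)|))
      = Real.sin α * ∫ t in Set.Ioi (0:ℝ), Real.sinh (d*t) / (Real.cos α - Real.cosh t) ∧
    (∑' m : ℕ, Real.sin (((m:ℝ)+1) * α) * (1 / |d + ((m:ℝ)+1)| - 1 / |d - ((m:ℝ)+1)|)) < 0 := by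
  obtain ⟨hα0, hαπ⟩ := hα
  obtain ⟨hd0, hd1⟩ := hd
  have hsin : 0 < Real.sin α := Real.sin_pos_of_pos_of_lt_pi hα0 hαπ
  have hcos1 : Real.cos α < 1 := by
    have := Real.cos_lt_cos_of_nonneg_of_le_pi (le_refl 0) hαπ.le hα0
    simpa using this
  set s : ℕ → ℝ := fun m =>
    Real.sin (((m:ℝ)+1) * α) * (1 / |d + ((m:ℝ)+1)| - 1 / |d - ((m:ℝ)+1)|) with hs
  set F : ℕ → ℝ → ℝ := fun m t =>
    Real.sin (((m:ℝ)+1) * α) *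
      (Real.exp (-(((((m:ℝ)+1))+d)*t)) - Real.exp (-(((((m:ℝ)+1))-d)*t))) with hF
  have ha : ∀ m : ℕ, (0:ℝ) < ((m:ℝ)+1)+d := by
    intro m; have : (0:ℝ) ≤ (m:ℝ) := Nat.cast_nonneg m; linarith
  have hb : ∀ m : ℕ, (0:ℝ) < ((m:ℝ)+1)-d := by
    intro m; have : (0:ℝ) ≤ (m:ℝ) := Nat.cast_nonneg m; linarith
  have hFint : ∀ m : ℕ, MeasureTheory.IntegrableOn (F m) (Set.Ioi (0:ℝ)) := by
    intro m
    exact ((aux_exp_intble _ (ha m)).sub (aux_exp_intble _ (hb m))).const_mul _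
  have hFval : ∀ m : ℕ, ∫ t in Set.Ioi (0:ℝ), F m t = s m := by
    intro m
    simp only [hF]
    rw [MeasureTheory.integral_const_mul,
      MeasureTheory.integral_sub (aux_exp_intble _ (ha m)) (aux_exp_intble _ (hb m)),
      aux_exp_int _ (ha m), aux_exp_int _ (hb m), hs]
    have e1 : |d + ((m:ℝ)+1)| = ((m:ℝ)+1)+d := by
      rw [abs_of_pos (by linarith [ha m] : (0:ℝ) < d + ((m:ℝ)+1))]; ring
    have e2 : |d - ((m:ℝ)+1)| = ((m:ℝ)+1)-d := by
      rw [abs_of_neg (by linarith [hb m] : d - ((m:ℝ)+1) < 0)]; ring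
    simp only [e1, e2]
  have hFnorm : ∀ m : ℕ, ∫ t in Set.Ioi (0:ℝ), ‖F m t‖
      ≤ (2*d/(1-d^2)) * (1/((m:ℝ)+1)^2) := by
    intro m
    have hstep1 : ∫ t in Set.Ioi (0:ℝ), ‖F m t‖
        ≤ ∫ t in Set.Ioi (0:ℝ),
            (Real.exp (-(((((m:ℝ)+1))-d)*t)) - Real.exp (-(((((m:ℝ)+1))+d)*t))) := by
      apply MeasureTheory.setIntegral_mono_on ((hFint m).norm)
        ((aux_exp_intble _ (hb m)).sub (aux_exp_intble _ (ha m))) measurableSet_Ioi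
      intro t ht
      have ht0 : 0 < t := ht
      have hle : Real.exp (-((((m:ℝ)+1)+d)*t)) ≤ Real.exp (-((((m:ℝ)+1)-d)*t)) :=
        Real.exp_le_exp.mpr (by nlinarith)
      rw [hF, Real.norm_eq_abs, abs_mul, abs_sub_comm,
        abs_of_nonneg (sub_nonneg.mpr hle)]
      simp only [hF, abs_mul, Pi.sub_apply] at *
      nlinarith [sub_nonneg.mpr hle, abs_nonneg (Real.sin (((m:ℝ)+1) * α)),
        abs_sin_le_one (((m:ℝ)+1) * α)]
    have hstep2 : ∫ t in Set.Ioi (0:ℝ),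
        (Real.exp (-(((((m:ℝ)+1))-d)*t)) - Real.exp (-(((((m:ℝ)+1))+d)*t)))
        = 1/(((m:ℝ)+1)-d) - 1/(((m:ℝ)+1)+d) := by
      rw [MeasureTheory.integral_sub (aux_exp_intble _ (hb m)) (aux_exp_intble _ (ha m)),
        aux_exp_int _ (hb m), aux_exp_int _ (ha m)]
    have hstep3 : 1/(((m:ℝ)+1)-d) - 1/(((m:ℝ)+1)+d) ≤ (2*d/(1-d^2)) * (1/((m:ℝ)+1)^2) := by
      have hab : 1/(((m:ℝ)+1)-d) - 1/(((m:ℝ)+1)+d)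
          = 2*d/((((m:ℝ)+1)+d)*((((m:ℝ)+1))-d)) := by
        have h1 : ((m:ℝ)+1)-d ≠ 0 := (hb m).ne'
        have h2 : ((m:ℝ)+1)+d ≠ 0 := (ha m).ne'
        field_simp
        ring
      have hrhs : (2*d/(1-d^2)) * (1/((m:ℝ)+1)^2) = 2*d/((1-d^2)*((m:ℝ)+1)^2) := by
        rw [div_mul_div_comm]; ring_nf
      rw [hab, hrhs]
      have hm0 : (0:ℝ) ≤ (m:ℝ) := Nat.cast_nonneg m
      have hdd : (0:ℝ) < 1 - d^2 := by nlinarith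
      apply div_le_div_of_nonneg_left (by positivity) (mul_pos hdd (by positivity))
      nlinarith [hdd, mul_pos hdd (show (0:ℝ) < ((m:ℝ)+1)^2 by positivity),
        mul_nonneg (mul_nonneg hd0.le hd0.le)
          (show (0:ℝ) ≤ ((m:ℝ)+1)^2 - 1 by nlinarith)]
    rw [hstep2] at hstep1
    linarith
  have hSummable : Summable (fun m : ℕ => ∫ t in Set.Ioi (0:ℝ), ‖F m t‖) := by
    have base : Summable (fun n : ℕ => 1 / ((n:ℝ)) ^ 2) :=
      (Real.summable_one_div_nat_pow).mpr one_lt_two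
    have shifted : Summable (fun n : ℕ => 1 / ((n:ℝ)+1) ^ 2) := by
      have := (summable_nat_add_iff 1).mpr base
      refine this.congr fun n => ?_
      push_cast
      ring
    refine Summable.of_nonneg_of_le
      (fun m => MeasureTheory.integral_nonneg fun t => norm_nonneg _) hFnorm ?_
    exact shifted.mul_left _
  have hcc : ∀ t : ℝ, 0 < Real.cosh t - Real.cos α := by
    intro t
    nlinarith [Real.one_le_cosh t]
  have hpt : ∀ t ∈ Set.Ioi (0:ℝ),
      (∑' m : ℕ, F m t) = Real.sin α * (Real.sinh (d*t) / (Real.cos α - Real.cosh t)) := by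
    intro t ht
    have ht0 : 0 < t := ht
    set x : ℝ := Real.exp (-t) with hx
    have hx0 : 0 < x := Real.exp_pos _
    have hgeo := aux_geom α t ht0 x hx
    have hHS := hgeo.mul_left (-2 * Real.sinh (d*t))
    have hterm : ∀ n : ℕ,
        (-2 * Real.sinh (d*t)) * (Real.sin (((n:ℝ)+1)*α) * x^(n+1)) = F n t := by
      intro n
      have e1 : Real.exp (-(((((n:ℝ)+1))+d)*t)) = x^(n+1) * Real.exp (-(d*t)) := by
        rw [hx, ← Real.exp_nat_mul, ← Real.exp_add]
        congr 1
        push_cast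
        ring
      have e2 : Real.exp (-(((((n:ℝ)+1))-d)*t)) = x^(n+1) * Real.exp (d*t) := by
        rw [hx, ← Real.exp_nat_mul, ← Real.exp_add]
        congr 1
        push_cast
        ring
      rw [hF]
      simp only [e1, e2, Real.sinh_eq]
      ring
    have hHS2 : HasSum (fun n => F n t)
        ((-2 * Real.sinh (d*t)) * (x * Real.sin α / (1 - 2*x*Real.cos α + x^2))) :=
      hHS.congr_fun (fun n => (hterm n).symm)
    rw [hHS2.tsum_eq]
    have h1 : Real.exp (-t) * Real.exp t = 1 := by
      rw [← Real.exp_add]; simp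
    have hD2 : 1 - 2*x*Real.cos α + x^2 = 2*x*(Real.cosh t - Real.cos α) := by
      rw [hx, Real.cosh_eq]
      ring_nf
      nlinarith [h1]
    rw [hD2]
    have hc1 : Real.cosh t - Real.cos α ≠ 0 := ne_of_gt (hcc t)
    have hc2 : Real.cos α - Real.cosh t ≠ 0 := by
      intro h; apply hc1; linarith [h]
    field_simp
    ring
  have hHS := MeasureTheory.hasSum_integral_of_summable_integral_norm
    (μ := MeasureTheory.volume.restrict (Set.Ioi (0:ℝ))) hFint hSummable
  have hieq : (∫ t in Set.Ioi (0:ℝ), (∑' m : ℕ, F m t))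
      = Real.sin α * ∫ t in Set.Ioi (0:ℝ), Real.sinh (d*t) / (Real.cos α - Real.cosh t) := by
    rw [MeasureTheory.setIntegral_congr_fun measurableSet_Ioi hpt]
    rw [MeasureTheory.integral_const_mul]
  have hS : HasSum s (Real.sin α *
      ∫ t in Set.Ioi (0:ℝ), Real.sinh (d*t) / (Real.cos α - Real.cosh t)) := by
    rw [← hieq]
    exact hHS.congr_fun (fun m => (hFval m).symm)
  -- integrability of the limit integrand
  have hIntegrand : MeasureTheory.IntegrableOn
      (fun t => Real.sinh (d*t) / (Real.cos α - Real.cosh t)) (Set.Ioi (0:ℝ)) := by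
    have hg : MeasureTheory.IntegrableOn
        (fun t => 2/(1-Real.cos α) * Real.exp (-((1-d)*t))) (Set.Ioi (0:ℝ)) :=
      (aux_exp_intble _ (by linarith)).const_mul _
    apply MeasureTheory.Integrable.mono' hg
    · apply Measurable.aestronglyMeasurable
      exact (Real.measurable_sinh.comp (measurable_id.const_mul d)).div
        (measurable_const.sub Real.measurable_cosh)
    · rw [MeasureTheory.ae_restrict_iff' measurableSet_Ioi]
      refine MeasureTheory.ae_of_all _ fun t ht => ?_
      have ht0 : 0 < t := ht
      have hsh : 0 < Real.sinh (d*t) := Real.sinh_pos_iff.mpr (by positivity)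
      have h1 : 0 < Real.cosh t - Real.cos α := hcc t
      have habs : ‖Real.sinh (d*t) / (Real.cos α - Real.cosh t)‖
          = Real.sinh (d*t) / (Real.cosh t - Real.cos α) := by
        rw [Real.norm_eq_abs, abs_div, abs_of_pos hsh,
          abs_of_neg (by linarith : Real.cos α - Real.cosh t < 0), neg_sub]
      rw [habs]
      have hnum : Real.sinh (d*t) ≤ Real.exp (d*t)/2 := by
        rw [Real.sinh_eq]
        nlinarith [Real.exp_pos (-(d*t))]
      have hcoshe : Real.exp t/2 ≤ Real.cosh t := by
        rw [Real.cosh_eq]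
        nlinarith [Real.exp_pos (-t)]
      have hden : (1-Real.cos α)*Real.exp t/4 ≤ Real.cosh t - Real.cos α := by
        nlinarith [mul_nonneg (by linarith : (0:ℝ) ≤ 1 - Real.cos α)
            (by linarith : (0:ℝ) ≤ Real.cosh t - Real.exp t/2),
          mul_nonneg (by nlinarith [Real.neg_one_le_cos α] : (0:ℝ) ≤ 1 + Real.cos α)
            (by nlinarith [Real.one_le_cosh t] : (0:ℝ) ≤ Real.cosh t - 1)]
      have hdpos : (0:ℝ) < (1-Real.cos α)*Real.exp t/4 := by
        have := Real.exp_pos t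
        nlinarith
      calc Real.sinh (d*t) / (Real.cosh t - Real.cos α)
          ≤ (Real.exp (d*t)/2) / ((1-Real.cos α)*Real.exp t/4) :=
            div_le_div₀ (by positivity) hnum hdpos hden
        _ = 2/(1-Real.cos α) * Real.exp (-((1-d)*t)) := by
            have he : Real.exp (-((1-d)*t)) = Real.exp (d*t) * (Real.exp t)⁻¹ := by
              rw [← Real.exp_neg, ← Real.exp_add]
              congr 1
              ring
            rw [he]
            have h2 : (1:ℝ) - Real.cos α ≠ 0 := by linarith
            have h3 : Real.exp t ≠ 0 := (Real.exp_pos t).ne'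
            field_simp
            ring
  have hineg : (∫ t in Set.Ioi (0:ℝ), Real.sinh (d*t) / (Real.cos α - Real.cosh t)) < 0 := by
    have hpos : 0 < ∫ t in Set.Ioi (0:ℝ),
        (fun t => -(Real.sinh (d*t) / (Real.cos α - Real.cosh t))) t := by
      rw [MeasureTheory.setIntegral_pos_iff_support_of_nonneg_ae]
      · have hsub : Set.Ioi (0:ℝ) ⊆
            (Function.support (fun t => -(Real.sinh (d*t) / (Real.cos α - Real.cosh t))))
              ∩ Set.Ioi (0:ℝ) := by
          intro t ht
          have ht0 : 0 < t := ht
          have hsh : 0 < Real.sinh (d*t) := Real.sinh_pos_iff.mpr (by positivity)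
          have h1 : Real.cos α - Real.cosh t < 0 := by linarith [hcc t]
          refine ⟨?_, ht⟩
          have : Real.sinh (d*t) / (Real.cos α - Real.cosh t) < 0 :=
            div_neg_of_pos_of_neg hsh h1
          simp only [Function.mem_support]
          intro hcontra
          rw [neg_eq_zero] at hcontra
          exact absurd hcontra (ne_of_lt this)
        calc (0:ENNReal) < MeasureTheory.volume (Set.Ioi (0:ℝ)) := by
              rw [Real.volume_Ioi]; exact ENNReal.zero_lt_top
          _ ≤ _ := MeasureTheory.measure_mono hsub
      · filter_upwards [MeasureTheory.ae_restrict_mem measurableSet_Ioi] with t ht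
        have ht0 : 0 < t := ht
        have hsh : 0 < Real.sinh (d*t) := Real.sinh_pos_iff.mpr (by positivity)
        have h1 : Real.cos α - Real.cosh t < 0 := by linarith [hcc t]
        have : Real.sinh (d*t) / (Real.cos α - Real.cosh t) < 0 :=
          div_neg_of_pos_of_neg hsh h1
        simp only [Pi.zero_apply]
        linarith
      · exact hIntegrand.neg
    rw [MeasureTheory.integral_neg] at hpos
    linarith
  -- finite symmetric sums equal partial sums
  have hfin : ∀ N : ℕ, ∑ m ∈ Finset.Icc (-(N:ℤ)) (N:ℤ), Real.sin (m * α) / |d + m|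
      = ∑ m ∈ Finset.range N, s m := by
    intro N
    induction N with
    | zero => simp
    | succ n ih =>
      have hins : Finset.Icc (-(n+1:ℤ)) (n+1:ℤ)
          = insert (-(n+1:ℤ)) (insert ((n+1:ℤ)) (Finset.Icc (-(n:ℤ)) (n:ℤ))) := by
        ext x
        simp only [Finset.mem_Icc, Finset.mem_insert]
        omega
      have hmem1 : (-(n+1:ℤ)) ∉ insert ((n+1:ℤ)) (Finset.Icc (-(n:ℤ)) (n:ℤ)) := by
        simp only [Finset.mem_insert, Finset.mem_Icc]
        omega
      have hmem2 : ((n+1:ℤ)) ∉ Finset.Icc (-(n:ℤ)) (n:ℤ) := by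
        simp only [Finset.mem_Icc]
        omega
      push_cast
      rw [hins, Finset.sum_insert hmem1, Finset.sum_insert hmem2]
      push_cast at ih
      rw [ih, Finset.sum_range_succ]
      push_cast
      have e1 : d + -((n:ℝ)+1) = d - ((n:ℝ)+1) := by ring
      rw [e1, neg_mul, Real.sin_neg]
      simp only [hs]
      ring
  refine ⟨?_, hS.tsum_eq, ?_⟩
  · rw [show (∑' m : ℕ, Real.sin (((m:ℝ)+1) * α) * (1 / |d + ((m:ℝ)+1)| - 1 / |d - ((m:ℝ)+1)|))
        = Real.sin α * ∫ t in Set.Ioi (0:ℝ), Real.sinh (d*t) / (Real.cos α - Real.cosh t)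
      from hS.tsum_eq]
    exact Filter.Tendsto.congr (fun N => (hfin N).symm) hS.tendsto_sum_nat
  · rw [show (∑' m : ℕ, Real.sin (((m:ℝ)+1) * α) * (1 / |d + ((m:ℝ)+1)| - 1 / |d - ((m:ℝ)+1)|))
        = Real.sin α * ∫ t in Set.Ioi (0:ℝ), Real.sinh (d*t) / (Real.cos α - Real.cosh t)
      from hS.tsum_eq]
    exact mul_neg_of_pos_of_neg hsin hineg
end

section
/- For 0 < d < 1, the real number g(d) := ∑_{m ∈ ℤ} (−1)^m/|d + m| = 1/d + ∑_{m=1}^∞ (−1)^m (1/(m + d) + 1/(m − d)) is strictly decreasing in d on (0, 1), and g(1/2) = 0. Consequently g(d) > 0 for d < 1/2 and g(d) < 0 for d > 1/2. -/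
open Filter Finset

private lemma poly_key (x a b : ℝ) (hx : 1 ≤ x) (ha0 : 0 < a) (ha1 : a < 1)
    (hb0 : 0 < b) (hb1 : b < 1) :
    (x+1)*(x^2-a)*(x^2-b) ≤ x*((x+1)^2-a)*((x+1)^2-b) := by
  nlinarith [mul_pos ha0 hb0, sq_nonneg (x-1), mul_pos ha0 hb0,
    mul_le_one₀ ha1.le hb0.le hb1.le, sq_nonneg x]

private lemma cdiff_eq (d1 d2 x : ℝ) (hx : 1 ≤ x) (h1 : 0 < d1) (h2 : d1 < d2) (h3 : d2 < 1) :
    (1/(x+d2) + 1/(x-d2)) - (1/(x+d1) + 1/(x-d1))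
      = ((d2^2 - d1^2) * (2*x)) / ((x^2-d1^2)*(x^2-d2^2)) := by
  have hd1 : 0 < d1 := h1
  have hxa : (0:ℝ) < x + d1 := by linarith
  have hxb : (0:ℝ) < x - d1 := by linarith
  have hxc : (0:ℝ) < x + d2 := by linarith
  have hxd : (0:ℝ) < x - d2 := by linarith
  have e1 : x^2 - d1^2 = (x-d1)*(x+d1) := by ring
  have e2 : x^2 - d2^2 = (x-d2)*(x+d2) := by ring
  rw [e1, e2]
  field_simp
  ring

private lemma cdiff_pos (d1 d2 x : ℝ) (hx : 1 ≤ x) (h1 : 0 < d1) (h2 : d1 < d2) (h3 : d2 < 1) :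
    0 ≤ (1/(x+d2) + 1/(x-d2)) - (1/(x+d1) + 1/(x-d1)) := by
  rw [cdiff_eq d1 d2 x hx h1 h2 h3]
  have h1a : (0:ℝ) < x^2 - d1^2 := by nlinarith
  have h1b : (0:ℝ) < x^2 - d2^2 := by nlinarith
  have : (0:ℝ) < d2^2 - d1^2 := by nlinarith
  positivity

private lemma cdiff_anti (d1 d2 x : ℝ) (hx : 1 ≤ x) (h1 : 0 < d1) (h2 : d1 < d2) (h3 : d2 < 1) :
    (1/((x+1)+d2) + 1/((x+1)-d2)) - (1/((x+1)+d1) + 1/((x+1)-d1))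
      ≤ (1/(x+d2) + 1/(x-d2)) - (1/(x+d1) + 1/(x-d1)) := by
  rw [cdiff_eq d1 d2 x hx h1 h2 h3, cdiff_eq d1 d2 (x+1) (by linarith) h1 h2 h3]
  have h1a : (0:ℝ) < x^2 - d1^2 := by nlinarith
  have h1b : (0:ℝ) < x^2 - d2^2 := by nlinarith
  have h2a : (0:ℝ) < (x+1)^2 - d1^2 := by nlinarith
  have h2b : (0:ℝ) < (x+1)^2 - d2^2 := by nlinarith
  have hdd : (0:ℝ) ≤ d2^2 - d1^2 := by nlinarith
  rw [div_le_div_iff₀ (by positivity) (by positivity)]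
  have key := poly_key x (d1^2) (d2^2) hx (by nlinarith) (by nlinarith) (by nlinarith) (by nlinarith)
  nlinarith [mul_le_mul_of_nonneg_left key hdd]

private lemma sum_nonneg_aux (d1 d2 : ℝ) (h1 : 0 < d1) (h2 : d1 < d2) (h3 : d2 < 1) (N : ℕ) :
    0 ≤ ∑ m ∈ Finset.Icc 1 N, (-1:ℝ)^m *
      ((1/((m:ℝ) + d1) + 1/((m:ℝ) - d1)) - (1/((m:ℝ) + d2) + 1/((m:ℝ) - d2))) := by
  set f : ℕ → ℝ := fun m => (-1:ℝ)^m *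
      ((1/((m:ℝ) + d1) + 1/((m:ℝ) - d1)) - (1/((m:ℝ) + d2) + 1/((m:ℝ) - d2))) with hf
  have hoddval : ∀ k : ℕ, f (2*k+1)
      = (1/(((2*k+1:ℕ):ℝ) + d2) + 1/(((2*k+1:ℕ):ℝ) - d2)) -
        (1/(((2*k+1:ℕ):ℝ) + d1) + 1/(((2*k+1:ℕ):ℝ) - d1)) := by
    intro k
    simp only [hf, pow_succ, pow_mul, neg_one_sq, one_pow, one_mul]
    ring
  have hevenval : ∀ k : ℕ, f (2*k+2)
      = -((1/(((2*k+2:ℕ):ℝ) + d2) + 1/(((2*k+2:ℕ):ℝ) - d2)) -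
          (1/(((2*k+2:ℕ):ℝ) + d1) + 1/(((2*k+2:ℕ):ℝ) - d1))) := by
    intro k
    have : 2*k+2 = 2*(k+1) := by ring
    simp only [hf, this, pow_mul, neg_one_sq, one_pow, one_mul]
    ring
  have hxk : ∀ k : ℕ, (1:ℝ) ≤ ((2*k+1:ℕ):ℝ) := by
    intro k; push_cast; linarith [Nat.cast_nonneg (α := ℝ) k]
  have hpair : ∀ k : ℕ, 0 ≤ f (2*k+1) + f (2*k+2) := by
    intro k
    rw [hoddval k, hevenval k]
    have hcast : ((2*k+2:ℕ):ℝ) = ((2*k+1:ℕ):ℝ) + 1 := by push_cast; ring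
    rw [hcast]
    have := cdiff_anti d1 d2 ((2*k+1:ℕ):ℝ) (hxk k) h1 h2 h3
    linarith
  have hoddpos : ∀ k : ℕ, 0 ≤ f (2*k+1) := by
    intro k
    rw [hoddval k]
    exact cdiff_pos d1 d2 _ (hxk k) h1 h2 h3
  have heven : ∀ k : ℕ, 0 ≤ ∑ m ∈ Finset.Icc 1 (2*k), f m := by
    intro k
    induction k with
    | zero => simp
    | succ n ih =>
      have e1 : 2*(n+1) = (2*n+1)+1 := by ring
      rw [e1, Finset.sum_Icc_succ_top (by omega), Finset.sum_Icc_succ_top (by omega)]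
      have := hpair n
      have e2 : (2*n+1)+1 = 2*n+2 := by ring
      rw [e2]
      linarith
  rcases Nat.even_or_odd N with ⟨k, hk⟩ | ⟨k, hk⟩
  · have : N = 2*k := by omega
    rw [this]; exact heven k
  · have : N = (2*k)+1 := by omega
    rw [this, Finset.sum_Icc_succ_top (by omega)]
    show 0 ≤ (∑ m ∈ Finset.Icc 1 (2*k), f m) + f (2*k+1)
    have := heven k
    have := hoddpos k
    linarith

private lemma F_half (N : ℕ) :
    1/(1/2:ℝ) + ∑ m ∈ Finset.Icc 1 N, (-1:ℝ)^m * (1/((m:ℝ) + 1/2) + 1/((m:ℝ) - 1/2))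
      = (-1:ℝ)^N * (2/(2*(N:ℝ)+1)) := by
  induction N with
  | zero => simp
  | succ n ih =>
    rw [Finset.sum_Icc_succ_top (Nat.succ_le_succ (Nat.zero_le n)), ← add_assoc, ih]
    have hn : (0:ℝ) ≤ (n:ℝ) := Nat.cast_nonneg n
    have h1 : ((n+1:ℕ):ℝ) + 1/2 ≠ 0 := by push_cast; positivity
    have h2 : ((n+1:ℕ):ℝ) - 1/2 ≠ 0 := by push_cast; intro h; nlinarith
    have h3 : 2*(n:ℝ)+1 ≠ 0 := by positivity
    have h4 : 2*((n:ℝ)+1)+1 ≠ 0 := by positivity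
    have h1' : (n:ℝ)+1+1/2 ≠ 0 := by positivity
    have h2' : (n:ℝ)+1-1/2 ≠ 0 := by intro h; nlinarith
    have key : 2/(2*(n:ℝ)+1) - (1/(((n:ℝ)+1) + 1/2) + 1/(((n:ℝ)+1) - 1/2))
        = -(2/(2*((n:ℝ)+1)+1)) := by
      have e1 : (((n:ℝ)+1) + 1/2) = (2*(n:ℝ)+3)/2 := by ring
      have e2 : (((n:ℝ)+1) - 1/2) = (2*(n:ℝ)+1)/2 := by ring
      have e3 : 2*((n:ℝ)+1)+1 = 2*(n:ℝ)+3 := by ring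
      rw [e1, e2, e3, one_div_div, one_div_div]
      ring
    rw [pow_succ]
    push_cast
    linear_combination ((-1:ℝ)^n) * key

private lemma tendsto_half : Filter.Tendsto (fun N : ℕ => (-1:ℝ)^N * (2/(2*(N:ℝ)+1)))
    Filter.atTop (nhds 0) := by
  have hb : Filter.Tendsto (fun N : ℕ => 2/(2*(N:ℝ)+1)) Filter.atTop (nhds 0) := by
    apply Filter.Tendsto.div_atTop (tendsto_const_nhds)
    apply Filter.tendsto_atTop_add_const_right
    exact (tendsto_natCast_atTop_atTop (R := ℝ)).const_mul_atTop (by norm_num)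
  have hbn : Filter.Tendsto (fun N : ℕ => -(2/(2*(N:ℝ)+1))) Filter.atTop (nhds 0) := by
    simpa using hb.neg
  refine tendsto_of_tendsto_of_tendsto_of_le_of_le hbn hb ?_ ?_
  · intro N
    have h0 : (0:ℝ) ≤ 2/(2*(N:ℝ)+1) := by positivity
    show -(2/(2*(N:ℝ)+1)) ≤ (-1:ℝ)^N * (2/(2*(N:ℝ)+1))
    rcases Nat.even_or_odd N with h | h
    · rw [h.neg_one_pow]; linarith
    · rw [h.neg_one_pow]; linarith
  · intro N
    have h0 : (0:ℝ) ≤ 2/(2*(N:ℝ)+1) := by positivity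
    show (-1:ℝ)^N * (2/(2*(N:ℝ)+1)) ≤ 2/(2*(N:ℝ)+1)
    rcases Nat.even_or_odd N with h | h
    · rw [h.neg_one_pow]; linarith
    · rw [h.neg_one_pow]; linarith

theorem stmt_11 (g : ℝ → ℝ)
    (hg : ∀ d ∈ Set.Ioo (0:ℝ) 1,
      Filter.Tendsto (fun N : ℕ => 1/d + ∑ m ∈ Finset.Icc 1 N,
        (-1:ℝ)^m * (1/((m:ℝ) + d) + 1/((m:ℝ) - d))) Filter.atTop (nhds (g d))) :
    StrictAntiOn g (Set.Ioo 0 1) ∧ g (1/2) = 0 ∧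
    (∀ d ∈ Set.Ioo (0:ℝ) 1, d < 1/2 → 0 < g d) ∧
    (∀ d ∈ Set.Ioo (0:ℝ) 1, 1/2 < d → g d < 0) := by
  have hanti : StrictAntiOn g (Set.Ioo 0 1) := by
    intro d1 hd1 d2 hd2 hlt
    have hT : Filter.Tendsto (fun N : ℕ =>
        (1/d1 + ∑ m ∈ Finset.Icc 1 N, (-1:ℝ)^m * (1/((m:ℝ) + d1) + 1/((m:ℝ) - d1))) -
        (1/d2 + ∑ m ∈ Finset.Icc 1 N, (-1:ℝ)^m * (1/((m:ℝ) + d2) + 1/((m:ℝ) - d2))))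
        Filter.atTop (nhds (g d1 - g d2)) := (hg d1 hd1).sub (hg d2 hd2)
    have hbound : ∀ N : ℕ, 1/d1 - 1/d2 ≤
        (1/d1 + ∑ m ∈ Finset.Icc 1 N, (-1:ℝ)^m * (1/((m:ℝ) + d1) + 1/((m:ℝ) - d1))) -
        (1/d2 + ∑ m ∈ Finset.Icc 1 N, (-1:ℝ)^m * (1/((m:ℝ) + d2) + 1/((m:ℝ) - d2))) := by
      intro N
      have e : (∑ m ∈ Finset.Icc 1 N, (-1:ℝ)^m * (1/((m:ℝ) + d1) + 1/((m:ℝ) - d1))) -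
          (∑ m ∈ Finset.Icc 1 N, (-1:ℝ)^m * (1/((m:ℝ) + d2) + 1/((m:ℝ) - d2)))
          = ∑ m ∈ Finset.Icc 1 N, (-1:ℝ)^m *
            ((1/((m:ℝ) + d1) + 1/((m:ℝ) - d1)) - (1/((m:ℝ) + d2) + 1/((m:ℝ) - d2))) := by
        rw [← Finset.sum_sub_distrib]
        exact Finset.sum_congr rfl (fun m _ => by ring)
      have hs := sum_nonneg_aux d1 d2 hd1.1 hlt hd2.2 N
      linarith
    have hkey : 1/d1 - 1/d2 ≤ g d1 - g d2 := ge_of_tendsto' hT hbound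
    have : 1/d2 < 1/d1 := one_div_lt_one_div_of_lt hd1.1 hlt
    linarith
  have hhalf : g (1/2) = 0 := by
    have h0 : Filter.Tendsto (fun N : ℕ => 1/(1/2:ℝ) + ∑ m ∈ Finset.Icc 1 N,
        (-1:ℝ)^m * (1/((m:ℝ) + 1/2) + 1/((m:ℝ) - 1/2))) Filter.atTop (nhds 0) := by
      have : (fun N : ℕ => 1/(1/2:ℝ) + ∑ m ∈ Finset.Icc 1 N,
          (-1:ℝ)^m * (1/((m:ℝ) + 1/2) + 1/((m:ℝ) - 1/2)))
          = fun N : ℕ => (-1:ℝ)^N * (2/(2*(N:ℝ)+1)) := funext F_half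
      rw [this]
      exact tendsto_half
    exact tendsto_nhds_unique (hg (1/2) ⟨by norm_num, by norm_num⟩) h0
  have hmem : (1/2:ℝ) ∈ Set.Ioo (0:ℝ) 1 := ⟨by norm_num, by norm_num⟩
  refine ⟨hanti, hhalf, ?_, ?_⟩
  · intro d hd hlt
    have := hanti hd hmem hlt
    linarith [hhalf ▸ this]
  · intro d hd hlt
    have := hanti hmem hd hlt
    linarith [hhalf ▸ this]
end

section
/- For 0 < d < 1, the alternating series ∑_{m=1}^∞ (−1)^m [1/(m − d)² − 1/(m + d)²] converges to a negative value. In particular, −1/d² + ∑_{m=1}^∞ (−1)^m [1/(m − d)² − 1/(m + d)²] < 0. -/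
/-!
Writing a_m = 1/(m - d)² - 1/(m + d)² = 4dm/(m² - d²)², the terms are summable and strictly
decreasing in m. Grouping the alternating series into the pairs a_{2k+1} - a_{2k+2} shows that
∑ (-1)^m a_m = -∑_k (a_{2k+1} - a_{2k+2}) is a sum of negative terms.
-/

open Set

lemma summable_one_div_nat_add_sq (a : ℝ) : Summable fun n : ℕ => 1 / ((n : ℝ) + a) ^ 2 := by
  simpa [Real.rpow_two, sq_abs] using (Real.summable_one_div_nat_add_rpow a 2).mpr one_lt_two

lemma tsum_neg_one_pow_mul_pos_of_strictAnti {g : ℕ → ℝ} (hg : StrictAnti g) (hs : Summable g) :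
    0 < ∑' m, (-1) ^ m * g m := by
  have heven : Summable fun k => g (2 * k) := hs.comp_injective fun a b h => by omega
  have hodd : Summable fun k => g (2 * k + 1) := hs.comp_injective fun a b h => by omega
  have hpairs : ∑' m, (-1) ^ m * g m = ∑' k, g (2 * k) - ∑' k, g (2 * k + 1) := by
    rw [← tsum_even_add_odd (f := fun m => (-1) ^ m * g m), sub_eq_add_neg, ← tsum_neg]
    · simp [pow_succ, pow_mul]
    · simpa [pow_mul] using heven
    · simpa [pow_succ, pow_mul] using hodd.neg
  rw [hpairs, sub_pos]
  exact hodd.tsum_lt_tsum (fun k => (hg (by omega)).le) (hg (Nat.lt_succ_self (2 * 0))) heven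

lemma one_div_sub_sq_sub_one_div_add_sq_eq {d x : ℝ} (hx : d < x) (hd : 0 < d) :
    1 / (x - d) ^ 2 - 1 / (x + d) ^ 2 = 4 * d * x / (x ^ 2 - d ^ 2) ^ 2 := by
  have h1 : x - d ≠ 0 := by linarith
  have h2 : x + d ≠ 0 := by linarith
  rw [show x ^ 2 - d ^ 2 = (x - d) * (x + d) by ring]
  field_simp
  ring

lemma strictAntiOn_one_div_sub_sq_sub_one_div_add_sq {d : ℝ} (hd : 0 < d) :
    StrictAntiOn (fun x : ℝ => 1 / (x - d) ^ 2 - 1 / (x + d) ^ 2) (Ioi d) := by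
  intro x (hx : d < x) y (hy : d < y) hxy
  simp only [one_div_sub_sq_sub_one_div_add_sq_eq hx hd, one_div_sub_sq_sub_one_div_add_sq_eq hy hd]
  set u := x ^ 2 - d ^ 2
  set v := y ^ 2 - d ^ 2
  have hx0 : 0 < x := hd.trans hx
  have hy0 : 0 < y := hd.trans hy
  have hu : 0 < u := by nlinarith
  have hv : 0 < v := by nlinarith
  -- `u / x²` increases with `x`, which beats the single factor `x` in `x / u²`.
  have hratio : u * y ^ 2 ≤ v * x ^ 2 := by
    have : x ^ 2 < y ^ 2 := by gcongr
    nlinarith [mul_lt_mul_of_pos_left this (pow_pos hd 2)]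
  have hcube : x ^ 3 < y ^ 3 := by gcongr
  have key : y * u ^ 2 * y ^ 3 < x * v ^ 2 * y ^ 3 :=
    calc y * u ^ 2 * y ^ 3 = (u * y ^ 2) ^ 2 := by ring
      _ ≤ (v * x ^ 2) ^ 2 := by gcongr
      _ = x * v ^ 2 * x ^ 3 := by ring
      _ < x * v ^ 2 * y ^ 3 := by gcongr
  rw [div_lt_div_iff₀ (by positivity) (by positivity)]
  have := mul_lt_mul_of_pos_left (lt_of_mul_lt_mul_right key (by positivity))
    (by positivity : (0 : ℝ) < 4 * d)
  linarith

theorem stmt_12 (d : ℝ) (hd : 0 < d) (hd1 : d < 1) :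
    Summable (fun m : ℕ => (-1:ℝ)^(m+1) * (1/(((m:ℝ)+1) - d)^2 - 1/(((m:ℝ)+1) + d)^2)) ∧
    (∑' m : ℕ, (-1:ℝ)^(m+1) * (1/(((m:ℝ)+1) - d)^2 - 1/(((m:ℝ)+1) + d)^2)) < 0 ∧
    -1/d^2 + (∑' m : ℕ, (-1:ℝ)^(m+1) * (1/(((m:ℝ)+1) - d)^2 - 1/(((m:ℝ)+1) + d)^2)) < 0 := by
  set a : ℕ → ℝ := fun m => 1 / (((m : ℝ) + 1) - d) ^ 2 - 1 / (((m : ℝ) + 1) + d) ^ 2 with ha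
  have ha_summable : Summable a :=
    ((summable_one_div_nat_add_sq (1 - d)).sub (summable_one_div_nat_add_sq (1 + d))).congr
      fun m => by ring
  have ha_anti : StrictAnti a := strictAnti_nat_of_succ_lt fun m => by
    have hm : d < (m : ℝ) + 1 := by linarith [m.cast_nonneg (α := ℝ)]
    have := strictAntiOn_one_div_sub_sq_sub_one_div_add_sq hd hm
      (show d < (m : ℝ) + 1 + 1 by linarith) (lt_add_one _)
    simpa only [ha, Nat.cast_succ] using this
  have hseries : (fun m : ℕ => (-1 : ℝ) ^ (m + 1) * a m) = fun m => -((-1) ^ m * a m) := by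
    funext m
    ring
  have hpos := tsum_neg_one_pow_mul_pos_of_strictAnti ha_anti ha_summable
  rw [hseries, tsum_neg]
  refine ⟨ha_summable.alternating.neg, by linarith, ?_⟩
  have : 0 < 1 / d ^ 2 := by positivity
  rw [neg_div]
  linarith
end

section
/- Let z: ℝ → ℂ be continuous and 2π-periodic with z(α) ≠ 0 for all α. Suppose Im z(α) > 0 for α ∈ (0, π), Im z(α) < 0 for α ∈ (−π, 0), and z(0) < 0 (negative real). If z(π) < 0 then the winding number of z around 0 is 0; if z(π) > 0 then the winding number of z around 0 is ±1 (nonzero). -/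
open Real

/-- Confinement: if `sin (θ α) ≠ 0` on an open interval and `θ a = c` with `sin c = 0`,
then `θ` stays in `(c - π, c + π)` on the open interval. -/
lemma confine_aux {θ : ℝ → ℝ} (hθ : Continuous θ) {a b c : ℝ} (hab : a < b)
    (hs : ∀ α ∈ Set.Ioo a b, Real.sin (θ α) ≠ 0) (hca : θ a = c) (hsc : Real.sin c = 0) :
    ∀ α ∈ Set.Ioo a b, c - π < θ α ∧ θ α < c + π := by
  have hπ : (0:ℝ) < π := Real.pi_pos
  intro α hα
  constructor
  · by_contra h
    push_neg at h
    have hmem : c - π ∈ Set.Icc (θ α) (θ a) := ⟨h, by rw [hca]; linarith⟩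
    obtain ⟨x, hx, hxe⟩ := intermediate_value_Icc' (le_of_lt hα.1) hθ.continuousOn hmem
    have hxa : x ≠ a := by
      intro hxa; rw [hxa, hca] at hxe; linarith
    have : Real.sin (θ x) ≠ 0 :=
      hs x ⟨lt_of_le_of_ne hx.1 (Ne.symm hxa), lt_of_le_of_lt hx.2 hα.2⟩
    rw [hxe, Real.sin_sub_pi, hsc] at this
    simp at this
  · by_contra h
    push_neg at h
    have hmem : c + π ∈ Set.Icc (θ a) (θ α) := ⟨by rw [hca]; linarith, h⟩
    obtain ⟨x, hx, hxe⟩ := intermediate_value_Icc (le_of_lt hα.1) hθ.continuousOn hmem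
    have hxa : x ≠ a := by
      intro hxa; rw [hxa, hca] at hxe; linarith
    have : Real.sin (θ x) ≠ 0 :=
      hs x ⟨lt_of_le_of_ne hx.1 (Ne.symm hxa), lt_of_le_of_lt hx.2 hα.2⟩
    rw [hxe, Real.sin_add_pi, hsc] at this
    simp at this

/-- An endpoint bound: if `lo ≤ θ ≤ hi` on `Ioo a b` then also at `b`. -/
lemma endpoint_aux {θ : ℝ → ℝ} (hθ : Continuous θ) {a b lo hi : ℝ} (hab : a < b)
    (h : ∀ α ∈ Set.Ioo a b, lo ≤ θ α ∧ θ α ≤ hi) : lo ≤ θ b ∧ θ b ≤ hi := by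
  have hsub : Set.Ioo a b ⊆ θ ⁻¹' Set.Icc lo hi := fun x hx => ⟨(h x hx).1, (h x hx).2⟩
  have hcl : closure (Set.Ioo a b) ⊆ θ ⁻¹' Set.Icc lo hi := by
    rw [← (isClosed_Icc.preimage hθ).closure_eq]
    exact closure_mono hsub
  have hb : b ∈ closure (Set.Ioo a b) := by
    rw [closure_Ioo (ne_of_lt hab)]; exact ⟨le_of_lt hab, le_refl b⟩
  exact hcl hb

lemma sin_neg_of_neg' {t : ℝ} (h1 : -π < t) (h2 : t < π) (h : Real.sin t < 0) : t < 0 := by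
  by_contra h'
  push_neg at h'
  exact absurd (Real.sin_nonneg_of_nonneg_of_le_pi h' (le_of_lt h2)) (not_le.2 h)

lemma sin_pos_of_pos' {t : ℝ} (h1 : -π < t) (h2 : t < π) (h : 0 < Real.sin t) : 0 < t := by
  have := sin_neg_of_neg' (t := -t) (by linarith) (by linarith)
    (by rw [Real.sin_neg]; linarith)
  linarith

lemma cos_eq_one_t {t : ℝ} (h1 : -π ≤ t) (h2 : t ≤ π) (h : Real.cos t = 1) : t = 0 := by
  have hπ : (0:ℝ) < π := Real.pi_pos
  exact (Real.cos_eq_one_iff_of_lt_of_lt (by linarith) (by linarith)).1 h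

lemma cos_eq_neg_one_t {t : ℝ} (h1 : -π ≤ t) (h2 : t ≤ 0) (h : Real.cos t = -1) : t = -π := by
  have hπ : (0:ℝ) < π := Real.pi_pos
  have h3 : Real.cos (t + π) = 1 := by rw [Real.cos_add_pi, h]; ring
  have := cos_eq_one_t (by linarith) (by linarith) h3
  linarith

lemma cos_pm_aux {x : ℝ} (hs : Real.sin x = 0) : Real.cos x = 1 ∨ Real.cos x = -1 := by
  have h := Real.sin_sq_add_cos_sq x
  have h2 : (Real.cos x - 1) * (Real.cos x + 1) = 0 := by nlinarith
  rcases mul_eq_zero.mp h2 with h3 | h3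
  · left; linarith
  · right; linarith

theorem stmt_14 (z : ℝ → ℂ) (hz : Continuous z) (hper : ∀ α, z (α + 2*π) = z α)
    (hnz : ∀ α, z α ≠ 0)
    (him1 : ∀ α ∈ Set.Ioo (0:ℝ) π, 0 < (z α).im)
    (him2 : ∀ α ∈ Set.Ioo (-π) (0:ℝ), (z α).im < 0)
    (h0re : (z 0).re < 0) (h0im : (z 0).im = 0)
    (θ : ℝ → ℝ) (hθ : Continuous θ)
    (hzθ : ∀ α, z α = ((‖z α‖ : ℝ) : ℂ) * Complex.exp (Complex.I * θ α)) :
    ((z π).re < 0 ∧ (z π).im = 0 → θ (2*π) - θ 0 = 0) ∧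
    (0 < (z π).re ∧ (z π).im = 0 →
      θ (2*π) - θ 0 = 2*π ∨ θ (2*π) - θ 0 = -(2*π)) := by
  have hπ : (0:ℝ) < π := Real.pi_pos
  have hrpos : ∀ α, 0 < ‖z α‖ := fun α => norm_pos_iff.mpr (hnz α)
  have hre : ∀ α, (z α).re = ‖z α‖ * Real.cos (θ α) := by
    intro α
    conv_lhs => rw [hzθ α]
    rw [mul_comm Complex.I]
    simp [Complex.mul_re, Complex.exp_ofReal_mul_I_re, Complex.exp_ofReal_mul_I_im]
  have him : ∀ α, (z α).im = ‖z α‖ * Real.sin (θ α) := by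
    intro α
    conv_lhs => rw [hzθ α]
    rw [mul_comm Complex.I]
    simp [Complex.mul_im, Complex.exp_ofReal_mul_I_re, Complex.exp_ofReal_mul_I_im]
  -- transfer sign info to sin/cos of θ
  have hsin0 : ∀ α, (z α).im = 0 → Real.sin (θ α) = 0 := by
    intro α h
    have h2 := him α
    rw [h] at h2
    rcases mul_eq_zero.mp h2.symm with h3 | h3
    · exact absurd h3 (ne_of_gt (hrpos α))
    · exact h3
  have hcosneg : ∀ α, (z α).im = 0 → (z α).re < 0 → Real.cos (θ α) = -1 := by
    intro α h1 h2
    have hcl : Real.cos (θ α) < 0 := by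
      by_contra h'
      push_neg at h'
      have := hre α
      nlinarith [hrpos α]
    rcases cos_pm_aux (hsin0 α h1) with h3 | h3
    · linarith
    · exact h3
  have hcospos : ∀ α, (z α).im = 0 → 0 < (z α).re → Real.cos (θ α) = 1 := by
    intro α h1 h2
    have hcl : 0 < Real.cos (θ α) := by
      by_contra h'
      push_neg at h'
      have := hre α
      nlinarith [hrpos α]
    rcases cos_pm_aux (hsin0 α h1) with h3 | h3
    · exact h3
    · linarith
  have hsinpos : ∀ α ∈ Set.Ioo (0:ℝ) π, 0 < Real.sin (θ α) := by
    intro α hα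
    have h1 := him1 α hα
    rw [him α] at h1
    nlinarith [hrpos α]
  have hsinneg : ∀ α ∈ Set.Ioo π (2*π), Real.sin (θ α) < 0 := by
    intro α hα
    have he : z α = z (α - 2*π) := by
      have := hper (α - 2*π)
      rw [show α - 2*π + 2*π = α by ring] at this
      exact this
    have h1 : (z α).im < 0 := by
      rw [he]; exact him2 (α - 2*π) ⟨by linarith [hα.1], by linarith [hα.2]⟩
    rw [him α] at h1
    nlinarith [hrpos α]
  -- facts at 0 and 2π
  have hs0 : Real.sin (θ 0) = 0 := hsin0 0 h0im
  have hc0 : Real.cos (θ 0) = -1 := hcosneg 0 h0im h0re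
  have hz2 : z (2*π) = z 0 := by have := hper 0; rwa [zero_add] at this
  have hs2π : Real.sin (θ (2*π)) = 0 := hsin0 (2*π) (by rw [hz2]; exact h0im)
  have hc2π : Real.cos (θ (2*π)) = -1 := hcosneg (2*π) (by rw [hz2]; exact h0im)
    (by rw [hz2]; exact h0re)
  -- confinement on (0, π)
  have hconf1 := confine_aux hθ hπ
    (fun α hα => ne_of_gt (hsinpos α hα)) rfl hs0
  have hbnd1 : ∀ α ∈ Set.Ioo (0:ℝ) π, θ 0 - π ≤ θ α ∧ θ α ≤ θ 0 := by
    intro α hα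
    have h1 := hconf1 α hα
    have hsp := hsinpos α hα
    have heq : Real.sin (θ α - θ 0) = -Real.sin (θ α) := by
      rw [Real.sin_sub, hs0, hc0]; ring
    have := sin_neg_of_neg' (t := θ α - θ 0) (by linarith [h1.1]) (by linarith [h1.2])
      (by rw [heq]; linarith)
    exact ⟨le_of_lt h1.1, by linarith⟩
  have hend1 := endpoint_aux hθ hπ hbnd1
  have hπlt : π < 2*π := by linarith
  constructor
  · -- case z(π) negative real
    rintro ⟨hπre, hπim⟩
    have hsπ : Real.sin (θ π) = 0 := hsin0 π hπim
    have hcπ : Real.cos (θ π) = -1 := hcosneg π hπim hπre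
    -- θ π = θ 0
    have hcd : Real.cos (θ π - θ 0) = 1 := by
      rw [Real.cos_sub, hs0, hc0, hsπ, hcπ]; ring
    have hθπ : θ π = θ 0 := by
      have := cos_eq_one_t (t := θ π - θ 0) (by linarith [hend1.1]) (by linarith [hend1.2]) hcd
      linarith
    -- confinement on (π, 2π)
    have hconf2 := confine_aux hθ hπlt
      (fun α hα => ne_of_lt (hsinneg α hα)) rfl hsπ
    have hbnd2 : ∀ α ∈ Set.Ioo π (2*π), θ π ≤ θ α ∧ θ α ≤ θ π + π := by
      intro α hα
      have h1 := hconf2 α hα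
      have hsn := hsinneg α hα
      have heq : Real.sin (θ α - θ π) = -Real.sin (θ α) := by
        rw [Real.sin_sub, hsπ, hcπ]; ring
      have := sin_pos_of_pos' (t := θ α - θ π) (by linarith [h1.1]) (by linarith [h1.2])
        (by rw [heq]; linarith)
      exact ⟨by linarith, le_of_lt h1.2⟩
    have hend2 := endpoint_aux hθ hπlt hbnd2
    have hcd2 : Real.cos (θ (2*π) - θ π) = 1 := by
      rw [Real.cos_sub, hs2π, hc2π, hsπ, hcπ]; ring
    have := cos_eq_one_t (t := θ (2*π) - θ π) (by linarith [hend2.1]) (by linarith [hend2.2]) hcd2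
    linarith
  · -- case z(π) positive real
    rintro ⟨hπre, hπim⟩
    have hsπ : Real.sin (θ π) = 0 := hsin0 π hπim
    have hcπ : Real.cos (θ π) = 1 := hcospos π hπim hπre
    -- θ π = θ 0 - π
    have hcd : Real.cos (θ π - θ 0) = -1 := by
      rw [Real.cos_sub, hs0, hc0, hsπ, hcπ]; ring
    have hθπ : θ π = θ 0 - π := by
      have := cos_eq_neg_one_t (t := θ π - θ 0) (by linarith [hend1.1]) (by linarith [hend1.2]) hcd
      linarith
    -- confinement on (π, 2π)
    have hconf2 := confine_aux hθ hπlt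
      (fun α hα => ne_of_lt (hsinneg α hα)) rfl hsπ
    have hbnd2 : ∀ α ∈ Set.Ioo π (2*π), θ π - π ≤ θ α ∧ θ α ≤ θ π := by
      intro α hα
      have h1 := hconf2 α hα
      have hsn := hsinneg α hα
      have heq : Real.sin (θ α - θ π) = Real.sin (θ α) := by
        rw [Real.sin_sub, hsπ, hcπ]; ring
      have := sin_neg_of_neg' (t := θ α - θ π) (by linarith [h1.1]) (by linarith [h1.2])
        (by rw [heq]; linarith)
      exact ⟨le_of_lt h1.1, by linarith⟩
    have hend2 := endpoint_aux hθ hπlt hbnd2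
    have hcd2 : Real.cos (θ (2*π) - θ π) = -1 := by
      rw [Real.cos_sub, hs2π, hc2π, hsπ, hcπ]; ring
    have := cos_eq_neg_one_t (t := θ (2*π) - θ π) (by linarith [hend2.1]) (by linarith [hend2.2]) hcd2
    right
    linarith
end

section
/- For α ∈ (0, π) and 0 < d < 1, the following integral representation holds: ∑_{m ∈ ℤ} e^{i m α}/|d + m| = ∫_0^∞ (e^{−iα} sinh(d t) + sinh((1 − d) t))/(cosh t − cos α) dt, where the sum on the left is understood as Φ(e^{iα}, 1, d) + e^{−iα} Φ(e^{−iα}, 1, 1 − d) with Φ Lerch's transcendent. -/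
open Real MeasureTheory Set

-- lower bound on denominator
lemma aux_norm (θ w : ℝ) : |Real.sin θ| ≤ ‖1 - Complex.exp ((θ:ℂ) * Complex.I) * (w:ℂ)‖ := by
  rw [← Real.sqrt_sq_eq_abs, Complex.norm_def, Complex.normSq_apply]
  apply Real.sqrt_le_sqrt
  simp [Complex.exp_ofReal_mul_I_re, Complex.exp_ofReal_mul_I_im]
  nlinarith [Real.sin_sq_add_cos_sq θ, sq_nonneg (w - Real.cos θ)]

lemma aux_int (d s : ℝ) (hd : 0 < d) (hs : 0 < s) (z : ℂ)
    (hz : ∀ w : ℝ, s ≤ ‖1 - z * (w:ℂ)‖) :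
    IntegrableOn (fun t : ℝ => Complex.exp (-(d:ℂ) * t) / (1 - z * Complex.exp (-(t:ℂ)))) (Ioi 0) := by
  have hden : ∀ t : ℝ, (1 - z * Complex.exp (-(t:ℂ))) ≠ 0 := by
    intro t
    have h1 : Complex.exp (-(t:ℂ)) = ((Real.exp (-t) : ℝ) : ℂ) := by
      rw [Complex.ofReal_exp]; push_cast; ring_nf
    rw [h1]
    intro h
    have := hz (Real.exp (-t))
    rw [h, norm_zero] at this
    linarith
  apply Integrable.mono' (g := fun t : ℝ => Real.exp (-d * t) / s)
  · exact (exp_neg_integrableOn_Ioi 0 hd).div_const s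
  · apply Continuous.aestronglyMeasurable
    exact Continuous.div (by fun_prop) (by fun_prop) hden
  · filter_upwards with t
    rw [norm_div]
    apply div_le_div₀
    · positivity
    · simp [Complex.norm_exp]
    · exact hs
    · have h1 : Complex.exp (-(t:ℂ)) = ((Real.exp (-t) : ℝ) : ℂ) := by
        rw [Complex.ofReal_exp]; push_cast; ring_nf
      rw [h1]; exact hz _

lemma aux_alg (A P T : ℂ) (hA : A ≠ 0) (hP : P ≠ 0) (hT : T ≠ 0)
    (h1 : T - A ≠ 0) (h2 : A * T - 1 ≠ 0) :
    P⁻¹ / (1 - A*T⁻¹) + A⁻¹ * ((T⁻¹*P) / (1 - A⁻¹*T⁻¹))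
      = (A⁻¹ * ((P - P⁻¹)/2) + ((T*P⁻¹ - T⁻¹*P)/2)) / ((T+T⁻¹)/2 - (A+A⁻¹)/2) := by
  have e1 : 1 - A*T⁻¹ = (T - A) / T := by field_simp
  have e2 : 1 - A⁻¹*T⁻¹ = (A*T - 1) / (A*T) := by field_simp
  have e3 : (T+T⁻¹)/2 - (A+A⁻¹)/2 = ((T - A) * (A*T - 1)) / (2*A*T) := by
    field_simp; ring
  rw [e1, e2, e3, div_div_eq_mul_div, div_div_eq_mul_div, div_div_eq_mul_div,
      ← mul_div_assoc, div_add_div _ _ h1 h2,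
      div_eq_div_iff (mul_ne_zero h1 h2) (mul_ne_zero h1 h2)]
  field_simp
  ring

lemma aux_pt (α d t : ℝ) (ht : 0 < t) :
    Complex.exp (-(d:ℂ) * t) / (1 - Complex.exp (Complex.I * α) * Complex.exp (-(t:ℂ)))
      + Complex.exp (-(Complex.I * α)) *
        (Complex.exp (-((1-d : ℝ):ℂ) * t) / (1 - Complex.exp (-(Complex.I * α)) * Complex.exp (-(t:ℂ))))
      = (Complex.exp (-(Complex.I * α)) * (Real.sinh (d*t) : ℂ) + (Real.sinh ((1-d)*t) : ℂ))
          / ((Real.cosh t - Real.cos α : ℝ) : ℂ) := by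
  set A : ℂ := Complex.exp (Complex.I * α) with hA
  set P : ℂ := Complex.exp ((d:ℂ) * t) with hP
  set T : ℂ := Complex.exp ((t:ℂ)) with hT
  have hAeq : Complex.exp (-(Complex.I * α)) = A⁻¹ := by rw [Complex.exp_neg]
  have hPeq : Complex.exp (-(d:ℂ) * t) = P⁻¹ := by rw [neg_mul, Complex.exp_neg]
  have hTeq : Complex.exp (-(t:ℂ)) = T⁻¹ := by rw [Complex.exp_neg]
  have hQeq : Complex.exp (-((1-d : ℝ):ℂ) * t) = T⁻¹ * P := by
    rw [show -((1-d : ℝ):ℂ) * t = -(t:ℂ) + (d:ℂ) * t by push_cast; ring,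
      Complex.exp_add, Complex.exp_neg]
  have hs1 : ((Real.sinh (d*t)) : ℂ) = (P - P⁻¹)/2 := by
    rw [Real.sinh_eq]
    push_cast [Complex.ofReal_exp]
    rw [show (-(d*t) : ℂ) = -((d:ℂ)*t) by ring, Complex.exp_neg]
  have hs2 : ((Real.sinh ((1-d)*t)) : ℂ) = (T*P⁻¹ - T⁻¹*P)/2 := by
    rw [Real.sinh_eq]
    push_cast [Complex.ofReal_exp]
    rw [show (((1:ℂ)-d)*t : ℂ) = (t:ℂ) + -((d:ℂ)*t) by ring, Complex.exp_add,
      show (-((t:ℂ) + -((d:ℂ)*t)) : ℂ) = -(t:ℂ) + (d:ℂ)*t by ring, Complex.exp_add,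
      Complex.exp_neg, Complex.exp_neg]
  have hc : ((Real.cosh t - Real.cos α : ℝ) : ℂ) = (T+T⁻¹)/2 - (A+A⁻¹)/2 := by
    push_cast [Complex.ofReal_exp, Real.cosh_eq, Complex.ofReal_cos]
    rw [Complex.exp_neg]
    have : Complex.cos α = (A + A⁻¹)/2 := by
      have h2c := Complex.two_cos (x := (α:ℂ))
      rw [hA, mul_comm Complex.I (α:ℂ), ← Complex.exp_neg]
      rw [neg_mul] at h2c
      linear_combination h2c / 2
    rw [this]
  have hAne : A ≠ 0 := Complex.exp_ne_zero _
  have hPne : P ≠ 0 := Complex.exp_ne_zero _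
  have hTne : T ≠ 0 := Complex.exp_ne_zero _
  have hnormA : ‖A‖ = 1 := by
    rw [hA, Complex.norm_exp]
    simp
  have hnormT : ‖T‖ = Real.exp t := by
    rw [hT, Complex.norm_exp]
    simp
  have hexp1 : (1:ℝ) < Real.exp t := by
    rw [← Real.exp_zero]; exact Real.exp_lt_exp.mpr ht
  have h1 : T - A ≠ 0 := by
    rw [sub_ne_zero]
    intro h
    rw [← h, hnormT] at hnormA
    linarith
  have h2 : A * T - 1 ≠ 0 := by
    rw [sub_ne_zero]
    intro h
    have : ‖A * T‖ = 1 := by rw [h, norm_one]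
    rw [norm_mul, hnormA, hnormT, one_mul] at this
    linarith
  rw [hAeq, hPeq, hTeq, hQeq, hs1, hs2, hc]
  exact aux_alg A P T hAne hPne hTne h1 h2

theorem stmt_15 (α d : ℝ) (hα : α ∈ Set.Ioo 0 π) (hd : d ∈ Set.Ioo (0:ℝ) 1) :
    (∫ t in Set.Ioi (0:ℝ),
        Complex.exp (-(d:ℂ) * t) / (1 - Complex.exp (Complex.I * α) * Complex.exp (-(t:ℂ))))
      + Complex.exp (-(Complex.I * α)) *
        ∫ t in Set.Ioi (0:ℝ),
          Complex.exp (-((1-d : ℝ):ℂ) * t) / (1 - Complex.exp (-(Complex.I * α)) * Complex.exp (-(t:ℂ)))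
      = ∫ t in Set.Ioi (0:ℝ),
          (Complex.exp (-(Complex.I * α)) * (Real.sinh (d*t) : ℂ) + (Real.sinh ((1-d)*t) : ℂ))
            / ((Real.cosh t - Real.cos α : ℝ) : ℂ) := by
  have hsin : 0 < Real.sin α := Real.sin_pos_of_pos_of_lt_pi hα.1 hα.2
  have hz1 : ∀ w : ℝ, Real.sin α ≤ ‖1 - Complex.exp (Complex.I * α) * (w:ℂ)‖ := by
    intro w
    have := aux_norm α w
    rw [abs_of_pos hsin] at this
    rwa [mul_comm (α:ℂ) Complex.I] at this
  have hz2 : ∀ w : ℝ, Real.sin α ≤ ‖1 - Complex.exp (-(Complex.I * α)) * (w:ℂ)‖ := by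
    intro w
    have := aux_norm (-α) w
    rw [Real.sin_neg, abs_neg, abs_of_pos hsin] at this
    have he : (((-α : ℝ)):ℂ) * Complex.I = -(Complex.I * α) := by push_cast; ring
    rwa [he] at this
  have h1 := aux_int d (Real.sin α) hd.1 hsin _ hz1
  have h2 := aux_int (1-d) (Real.sin α) (by linarith [hd.2]) hsin _ hz2
  rw [← MeasureTheory.integral_const_mul,
    ← MeasureTheory.integral_add h1 (h2.const_mul _)]
  refine MeasureTheory.setIntegral_congr_fun measurableSet_Ioi fun t ht => ?_
  exact aux_pt α d t ht
end
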